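/- Let d > 0 and let g : [0, π/2] → ℝ be the generalized collision invariant function g(θ) = −∫₀^θ (∫_β^{π/2} sin(2α) e^{−1/(d cos α)} dα)/(cos²β · e^{1/(d cos β)}) dβ. Then each of the three weighted integrals ∫₀^{π/2} g(θ)·(sin θ/cos²θ)·e^{−1/(d cos θ)} dθ, ∫₀^{π/2} g(θ)·(sin θ/cos θ)·e^{−1/(d cos θ)} dθ, and ∫₀^{π/2} g(θ)·sin θ·e^{−1/(d cos θ)} dθ is finite and strictly negative; in particular the averages ⟨g·sin/cos²⟩_M, ⟨g·sin/cos⟩_M and ⟨g·sin⟩_M appearing in the hydrodynamic coefficients are well defined and nonzero. -/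

import Mathlib

open Real MeasureTheory Set

/-- The generalized collision invariant function `g` of the nematic alignment operator. -/
noncomputable def gci (d θ : ℝ) : ℝ :=
  -∫ β in (0:ℝ)..θ,
      (∫ α in β..(π/2), sin (2*α) * exp (-1 / (d * cos α))) /
        (cos β ^ 2 * exp (1 / (d * cos β)))

/-!
The inner integral `N(β) = ∫_β^{π/2} sin 2α e^{-1/(d cos α)} dα` is positive on `[0, π/2)`, and
since `α ↦ e^{-1/(d cos α)}` decreases while `∫_β^{π/2} sin 2α dα = cos² β`, it is at most
`cos² β e^{-1/(d cos β)}`. Hence the integrand `N(β) / (cos² β e^{1/(d cos β)})` of `g` lies in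
`(0, 1]`, so `g` is continuous on `[0, π/2]` and negative on `(0, π/2]`. From `e^{-1/x} ≤ k! x^k`,
each weight `sin θ / cos^k θ · e^{-1/(d cos θ)}` is bounded by `k! d^k`, so it is integrable,
and it is positive on `(0, π/2)`; the product with `g` is then integrable and negative.
-/

open scoped Nat

theorem intervalIntegrable_of_continuousOn_Ioo_of_norm_le {E : Type*} [NormedAddCommGroup E]
    {f : ℝ → E} {a b C : ℝ} (hab : a ≤ b) (hf : ContinuousOn f (Ioo a b))
    (hC : ∀ x ∈ Ioo a b, ‖f x‖ ≤ C) : IntervalIntegrable f volume a b := by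
  rw [intervalIntegrable_iff_integrableOn_Ioo_of_le hab]
  exact ⟨hf.aestronglyMeasurable measurableSet_Ioo, .restrict_of_bounded C measure_Ioo_lt_top
    ((ae_restrict_iff' measurableSet_Ioo).2 (.of_forall hC))⟩

theorem Real.exp_neg_one_div_le (n : ℕ) {x : ℝ} (hx : 0 < x) : exp (-1 / x) ≤ n ! * x ^ n := by
  rw [neg_div, one_div, exp_neg, inv_le_comm₀ (exp_pos _) (by positivity)]
  calc (n ! * x ^ n)⁻¹ = x⁻¹ ^ n / n ! := by rw [inv_pow, div_eq_mul_inv, mul_inv, mul_comm]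
    _ ≤ exp x⁻¹ := pow_div_factorial_le_exp _ (inv_nonneg.2 hx.le) n

theorem Real.cos_pos_of_mem_Ico_zero {θ : ℝ} (hθ : θ ∈ Ico 0 (π / 2)) : 0 < cos θ :=
  cos_pos_of_mem_Ioo ⟨by linarith [hθ.1, pi_pos], hθ.2⟩

theorem integral_sin_two_mul_to_pi_div_two (β : ℝ) :
    ∫ α in β..(π / 2), sin (2 * α) = cos β ^ 2 := by
  rw [intervalIntegral.integral_comp_mul_left (fun x => sin x) two_ne_zero, integral_sin,
    mul_comm 2 (π / 2), div_mul_cancel₀ _ two_ne_zero, cos_pi, cos_sq β, smul_eq_mul]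
  ring

section Weight

variable {d : ℝ} (hd : 0 < d)
include hd

theorem continuousOn_exp_div_mul_cos (c : ℝ) :
    ContinuousOn (fun θ => exp (c / (d * cos θ))) (Ioo 0 (π / 2)) :=
  (continuousOn_const.div (by fun_prop) fun _ hθ =>
    mul_ne_zero hd.ne' (cos_pos_of_mem_Ico_zero (Ioo_subset_Ico_self hθ)).ne').rexp

theorem norm_sin_div_cos_pow_mul_exp_le (k : ℕ) {θ : ℝ} (hθ : θ ∈ Ioo 0 (π / 2)) :
    ‖sin θ / cos θ ^ k * exp (-1 / (d * cos θ))‖ ≤ k ! * d ^ k := by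
  have hc := cos_pos_of_mem_Ico_zero (Ioo_subset_Ico_self hθ)
  have hs := sin_pos_of_pos_of_lt_pi hθ.1 (by linarith [hθ.2, pi_pos])
  rw [Real.norm_of_nonneg (by positivity)]
  calc sin θ / cos θ ^ k * exp (-1 / (d * cos θ))
      ≤ 1 / cos θ ^ k * (k ! * (d * cos θ) ^ k) := by
        gcongr
        exacts [sin_le_one θ, exp_neg_one_div_le k (by positivity)]
    _ = k ! * d ^ k := by field_simp; ring

theorem intervalIntegrable_sin_div_cos_pow_mul_exp (k : ℕ) :
    IntervalIntegrable (fun θ => sin θ / cos θ ^ k * exp (-1 / (d * cos θ))) volume 0 (π / 2) :=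
  intervalIntegrable_of_continuousOn_Ioo_of_norm_le pi_div_two_pos.le
    ((continuousOn_sin.div (by fun_prop) fun _ hθ =>
      pow_ne_zero k (cos_pos_of_mem_Ico_zero (Ioo_subset_Ico_self hθ)).ne').mul
      (continuousOn_exp_div_mul_cos hd (-1)))
    fun _ hθ => norm_sin_div_cos_pow_mul_exp_le hd k hθ

end Weight

namespace Gci

noncomputable def numerator (d β : ℝ) : ℝ :=
  ∫ α in β..(π / 2), sin (2 * α) * exp (-1 / (d * cos α))

noncomputable def integrand (d β : ℝ) : ℝ :=
  numerator d β / (cos β ^ 2 * exp (1 / (d * cos β)))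

theorem gci_eq (d θ : ℝ) : gci d θ = -∫ β in (0:ℝ)..θ, integrand d β := rfl

variable {d : ℝ} (hd : 0 < d)
include hd

theorem intervalIntegrable_sin_two_mul_mul_exp {β : ℝ} (hβ : β ∈ Icc 0 (π / 2)) :
    IntervalIntegrable (fun α => sin (2 * α) * exp (-1 / (d * cos α))) volume β (π / 2) := by
  refine IntervalIntegrable.mono_set (a := 0) ?_
    (uIcc_subset_uIcc (by rwa [uIcc_of_le pi_div_two_pos.le]) right_mem_uIcc)
  refine intervalIntegrable_of_continuousOn_Ioo_of_norm_le (C := 1) pi_div_two_pos.le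
    ((by fun_prop : Continuous fun α : ℝ => sin (2 * α)).continuousOn.mul
      (continuousOn_exp_div_mul_cos hd (-1))) fun α hα => ?_
  have hexp : exp (-1 / (d * cos α)) ≤ 1 := by
    simpa using exp_neg_one_div_le 0 (mul_pos hd (cos_pos_of_mem_Ico_zero (Ioo_subset_Ico_self hα)))
  rw [norm_mul, Real.norm_of_nonneg (exp_pos _).le]
  exact mul_le_one₀ (abs_sin_le_one _) (exp_pos _).le hexp

theorem numerator_pos {β : ℝ} (hβ : β ∈ Ico 0 (π / 2)) : 0 < numerator d β := by
  refine intervalIntegral.intervalIntegral_pos_of_pos_on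
    (intervalIntegrable_sin_two_mul_mul_exp hd (Ico_subset_Icc_self hβ)) (fun α hα => ?_) hβ.2
  have := sin_pos_of_pos_of_lt_pi (x := 2 * α) (by linarith [hβ.1, hα.1]) (by linarith [hα.2])
  positivity

theorem numerator_le {β : ℝ} (hβ : β ∈ Ico 0 (π / 2)) :
    numerator d β ≤ cos β ^ 2 * exp (-1 / (d * cos β)) := by
  have hcβ := cos_pos_of_mem_Ico_zero hβ
  calc numerator d β ≤ ∫ α in β..(π / 2), sin (2 * α) * exp (-1 / (d * cos β)) := by
        refine intervalIntegral.integral_mono_on_of_le_Ioo hβ.2.le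
          (intervalIntegrable_sin_two_mul_mul_exp hd (Ico_subset_Icc_self hβ))
          (Continuous.intervalIntegrable (by fun_prop) _ _) fun α hα => ?_
        have hcα := cos_pos_of_mem_Ico_zero ⟨by linarith [hβ.1, hα.1], hα.2⟩
        have hcos : cos α ≤ cos β :=
          cos_le_cos_of_nonneg_of_le_pi hβ.1 (by linarith [hα.2, pi_pos]) hα.1.le
        have := sin_nonneg_of_nonneg_of_le_pi (x := 2 * α) (by linarith [hβ.1, hα.1])
          (by linarith [hα.2])
        gcongr _ * exp ?_
        rw [neg_div, neg_div, neg_le_neg_iff]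
        gcongr
    _ = cos β ^ 2 * exp (-1 / (d * cos β)) := by
        rw [intervalIntegral.integral_mul_const, integral_sin_two_mul_to_pi_div_two]

theorem integrand_pos {β : ℝ} (hβ : β ∈ Ico 0 (π / 2)) : 0 < integrand d β := by
  have := cos_pos_of_mem_Ico_zero hβ
  have := numerator_pos hd hβ
  unfold integrand
  positivity

theorem integrand_le_one {β : ℝ} (hβ : β ∈ Ico 0 (π / 2)) : integrand d β ≤ 1 := by
  have := cos_pos_of_mem_Ico_zero hβ
  refine div_le_one_of_le₀ ((numerator_le hd hβ).trans ?_) (by positivity)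
  gcongr
  norm_num

theorem continuousOn_numerator : ContinuousOn (numerator d) (Icc 0 (π / 2)) := by
  have h := (intervalIntegrable_iff_integrableOn_Icc_of_le pi_div_two_pos.le).1
    (intervalIntegrable_sin_two_mul_mul_exp hd (left_mem_Icc.2 pi_div_two_pos.le))
  rw [← uIcc_of_le pi_div_two_pos.le] at h ⊢
  exact intervalIntegral.continuousOn_primitive_interval_left h

theorem intervalIntegrable_integrand : IntervalIntegrable (integrand d) volume 0 (π / 2) := by
  refine intervalIntegrable_of_continuousOn_Ioo_of_norm_le (C := 1) pi_div_two_pos.le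
    (((continuousOn_numerator hd).mono Ioo_subset_Icc_self).div
      ((continuous_cos.pow 2).continuousOn.mul (continuousOn_exp_div_mul_cos hd 1))
      fun β hβ => ?_) fun β hβ => ?_
  · have := cos_pos_of_mem_Ico_zero (Ioo_subset_Ico_self hβ)
    positivity
  · rw [Real.norm_of_nonneg (integrand_pos hd (Ioo_subset_Ico_self hβ)).le]
    exact integrand_le_one hd (Ioo_subset_Ico_self hβ)

theorem continuousOn_gci : ContinuousOn (gci d) (Icc 0 (π / 2)) := by
  have h := intervalIntegral.continuousOn_primitive_interval' (intervalIntegrable_integrand hd)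
    left_mem_uIcc
  rw [uIcc_of_le pi_div_two_pos.le] at h
  exact h.neg

theorem gci_neg {θ : ℝ} (hθ : θ ∈ Ioc 0 (π / 2)) : gci d θ < 0 := by
  rw [gci_eq, neg_neg_iff_pos]
  refine intervalIntegral.intervalIntegral_pos_of_pos_on
    ((intervalIntegrable_integrand hd).mono_set (uIcc_subset_uIcc left_mem_uIcc
      (by rw [uIcc_of_le pi_div_two_pos.le]; exact Ioc_subset_Icc_self hθ)))
    (fun β hβ => integrand_pos hd ⟨hβ.1.le, hβ.2.trans_le hθ.2⟩) hθ.1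

end Gci

section Weighted

variable {d : ℝ} (hd : 0 < d)
include hd

theorem integral_gci_mul_neg {w : ℝ → ℝ} (hw : IntervalIntegrable w volume 0 (π / 2))
    (hw_pos : ∀ θ ∈ Ioo 0 (π / 2), 0 < w θ) :
    IntervalIntegrable (fun θ => gci d θ * w θ) volume 0 (π / 2) ∧
      (∫ θ in (0:ℝ)..(π / 2), gci d θ * w θ) < 0 := by
  have hint := hw.continuousOn_mul
    (by rw [uIcc_of_le pi_div_two_pos.le]; exact Gci.continuousOn_gci hd)
  refine ⟨hint, ?_⟩
  have h := intervalIntegral.intervalIntegral_pos_of_pos_on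
    (f := fun θ => -(gci d θ * w θ)) hint.neg (fun θ hθ =>
      neg_pos.2 (mul_neg_of_neg_of_pos (Gci.gci_neg hd (Ioo_subset_Ioc_self hθ)) (hw_pos θ hθ)))
    pi_div_two_pos
  rwa [intervalIntegral.integral_neg, neg_pos] at h

theorem integral_gci_mul_sin_div_cos_pow_mul_exp_neg (k : ℕ) :
    IntervalIntegrable (fun θ => gci d θ * (sin θ / cos θ ^ k * exp (-1 / (d * cos θ))))
        volume 0 (π / 2) ∧
      (∫ θ in (0:ℝ)..(π / 2), gci d θ * (sin θ / cos θ ^ k * exp (-1 / (d * cos θ)))) < 0 :=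
  integral_gci_mul_neg hd (intervalIntegrable_sin_div_cos_pow_mul_exp hd k) fun θ hθ => by
    have := sin_pos_of_pos_of_lt_pi hθ.1 (by linarith [hθ.2, pi_pos])
    have := cos_pos_of_mem_Ico_zero (Ioo_subset_Ico_self hθ)
    positivity

end Weighted

/-- The three weighted integrals of the GCI function `g` appearing in the hydrodynamic
coefficients are finite (the integrands are interval-integrable) and strictly negative. -/
theorem gci_weighted_integrals_neg (d : ℝ) (hd : 0 < d) :
    (IntervalIntegrable
        (fun θ => gci d θ * (sin θ / cos θ ^ 2) * exp (-1 / (d * cos θ))) volume 0 (π/2) ∧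
      (∫ θ in (0:ℝ)..(π/2), gci d θ * (sin θ / cos θ ^ 2) * exp (-1 / (d * cos θ))) < 0) ∧
    (IntervalIntegrable
        (fun θ => gci d θ * (sin θ / cos θ) * exp (-1 / (d * cos θ))) volume 0 (π/2) ∧
      (∫ θ in (0:ℝ)..(π/2), gci d θ * (sin θ / cos θ) * exp (-1 / (d * cos θ))) < 0) ∧
    (IntervalIntegrable
        (fun θ => gci d θ * sin θ * exp (-1 / (d * cos θ))) volume 0 (π/2) ∧
      (∫ θ in (0:ℝ)..(π/2), gci d θ * sin θ * exp (-1 / (d * cos θ))) < 0) := by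
  have h := integral_gci_mul_sin_div_cos_pow_mul_exp_neg hd
  exact ⟨by simpa only [mul_assoc] using h 2, by simpa only [mul_assoc, pow_one] using h 1,
    by simpa only [mul_assoc, pow_zero, div_one] using h 0⟩
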